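/- As P → ∞, the ratio P̂out(P) / ( ε0·(1+εs)/P + εs^M/P^M ) converges to 1; in particular, the FSIC-PA outage probability with equal powers P0 = Ps = P tends to 0 as P → ∞ (no outage error floor). -/

import Mathlib

/-!
Almost surely all channel gains are nonnegative, and then secondary user `m` is in outage exactly
when `Hₘ < v` or `G < u`, where `u = ε₀(1+εₛ)/P` and `v = εₛ/P`. The outage event is therefore the
disjoint union of `{G < u}` and `{G ≥ u, H₁ < v, …, H_M < v}`, which gives the closed form
`P̂out = (1 - e^{-u}) + e^{-u} (1 - e^{-v})^M`. Since `1 - e^{-x} ~ x` as `x → 0`, the two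
nonnegative summands are asymptotic to `u` and `v^M`, hence `P̂out ~ u + v^M`.
-/

open MeasureTheory ProbabilityTheory Real Filter

/-- The interference threshold `τ(g) = max{0, g/α₀ − 1}`. -/
noncomputable def tau (α0 g : ℝ) : ℝ := max 0 (g / α0 - 1)

/-- The FSIC-PA achievable rate of a secondary user with channel gain `h`,
given the primary channel gain `g`. -/
noncomputable def rateFSIC (Ps α0 h g : ℝ) : ℝ :=
  if Ps * h ≤ tau α0 g then Real.logb 2 (1 + Ps * h)
  else Real.logb 2 (1 + tau α0 g)

/-- The FSIC-PA overall outage probability with equal powers `P0 = Ps = P`, realized on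
the canonical probability space carrying `M + 1` i.i.d. rate-one exponential random
variables: coordinate `0` is the primary channel gain `G = |g|²` and coordinates
`1, …, M` are the secondary channel gains `H₁, …, H_M`. -/
noncomputable def outageFSIC (M : ℕ) (R0 Rs P : ℝ) : ℝ :=
  haveI : IsProbabilityMeasure (expMeasure 1) := isProbabilityMeasure_expMeasure one_pos
  ((Measure.pi fun _ : Fin (M + 1) => expMeasure 1)
    {ω | (⨆ m : Fin M, rateFSIC P ((2 ^ R0 - 1) / P) (ω m.succ) (ω 0)) < Rs}).toReal

open Set Asymptotics Topology

namespace ProbabilityTheory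

instance nullSingletonClass_expMeasure (r : ℝ) : NullSingletonClass (expMeasure r) := by
  unfold expMeasure gammaMeasure; infer_instance

lemma expMeasure_Iio {r x : ℝ} (hr : 0 < r) (hx : 0 ≤ x) :
    expMeasure r (Iio x) = ENNReal.ofReal (1 - exp (-(r * x))) := by
  have := isProbabilityMeasure_expMeasure hr
  rw [measure_congr Iio_ae_eq_Iic, ← ofReal_measureReal, ← cdf_eq_real, cdf_expMeasure_eq hr,
    if_pos hx]

lemma expMeasure_compl_Iio {r x : ℝ} (hr : 0 < r) (hx : 0 ≤ x) :
    expMeasure r (Iio x)ᶜ = ENNReal.ofReal (exp (-(r * x))) := by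
  have := isProbabilityMeasure_expMeasure hr
  rw [prob_compl_eq_one_sub measurableSet_Iio, expMeasure_Iio hr hx, ← ENNReal.ofReal_one,
    ← ENNReal.ofReal_sub _ (sub_nonneg.2 (exp_le_one_iff.2 (by nlinarith))), sub_sub_cancel]

lemma ae_nonneg_expMeasure {r : ℝ} (hr : 0 < r) : ∀ᵐ x ∂expMeasure r, 0 ≤ x := by
  simp_rw [ae_iff, not_le]
  change expMeasure r (Iio 0) = 0
  simp [expMeasure_Iio hr le_rfl]

end ProbabilityTheory

namespace MeasureTheory.Measure

lemma pi_setOf_zero_mem_or_forall_succ_mem {α : Type*} [MeasurableSpace α]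
    (ν : Measure α) [IsProbabilityMeasure ν] {A : Set α} (hA : MeasurableSet A) (B : Set α)
    (M : ℕ) :
    Measure.pi (fun _ : Fin (M + 1) => ν) {ω | ω 0 ∈ A ∨ ∀ m : Fin M, ω m.succ ∈ B} =
      ν A + ν Aᶜ * ν B ^ M := by
  let S : Set (Fin (M + 1) → α) := univ.pi (Fin.cons A fun _ => univ)
  let T : Set (Fin (M + 1) → α) := univ.pi (Fin.cons Aᶜ fun _ => B)
  have hsplit : {ω : Fin (M + 1) → α | ω 0 ∈ A ∨ ∀ m : Fin M, ω m.succ ∈ B} = S ∪ T := by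
    ext ω
    simp only [S, T, mem_ofPred_eq, mem_union, mem_univ_pi, Fin.forall_fin_succ, Fin.cons_zero,
      Fin.cons_succ, mem_univ, implies_true, and_true, mem_compl_iff]
    tauto
  have hdisj : Disjoint S T := by
    refine disjoint_left.2 fun ω hS hT => (hT 0 (mem_univ _)) ?_
    simpa using hS 0 (mem_univ _)
  have hS : MeasurableSet S :=
    .univ_pi (Fin.cases hA fun _ => MeasurableSet.univ)
  rw [hsplit, measure_union' hdisj hS, Measure.pi_pi, Measure.pi_pi, Fin.prod_univ_succ,
    Fin.prod_univ_succ]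
  simp

end MeasureTheory.Measure

lemma Real.iSup_lt_iff_of_finite {ι : Type*} [Finite ι] {f : ι → ℝ} {a : ℝ} (ha : 0 < a) :
    ⨆ i, f i < a ↔ ∀ i, f i < a := by
  rcases isEmpty_or_nonempty ι with hι | hι
  · simp [Real.iSup_of_isEmpty, ha]
  · obtain ⟨i₀, hi₀⟩ := Finite.exists_max f
    exact ⟨fun h i => (le_ciSup (Finite.bddAbove_range f) i).trans_lt h,
      fun h => (ciSup_le hi₀).trans_lt (h i₀)⟩

lemma two_rpow_sub_one_pos {R : ℝ} (hR : 0 < R) : 0 < (2 : ℝ) ^ R - 1 :=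
  sub_pos.2 (one_lt_rpow one_lt_two hR)

lemma tau_lt_iff {α0 g c : ℝ} (hα0 : 0 < α0) (hc : 0 < c) :
    tau α0 g < c ↔ g < α0 * (1 + c) := by
  rw [tau, max_lt_iff, and_iff_right hc, sub_lt_iff_lt_add', div_lt_iff₀' hα0]

lemma rateFSIC_lt_iff {Ps α0 h g Rs : ℝ} (hPs : 0 < Ps) (hα0 : 0 < α0) (hh : 0 ≤ h)
    (hRs : 0 < Rs) :
    rateFSIC Ps α0 h g < Rs ↔ h < (2 ^ Rs - 1) / Ps ∨ g < α0 * 2 ^ Rs := by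
  have hrate : rateFSIC Ps α0 h g = logb 2 (1 + min (Ps * h) (tau α0 g)) := by
    unfold rateFSIC; split_ifs with hle
    · rw [min_eq_left hle]
    · rw [min_eq_right (le_of_not_ge hle)]
  have hmin : 0 ≤ min (Ps * h) (tau α0 g) := le_min (by positivity) (le_max_left _ _)
  rw [hrate, logb_lt_iff_lt_rpow one_lt_two (by linarith), ← lt_sub_iff_add_lt', min_lt_iff,
    tau_lt_iff hα0 (two_rpow_sub_one_pos hRs), lt_div_iff₀' hPs, add_sub_cancel]

lemma iSup_rateFSIC_lt_ae_eq {ν : Measure ℝ} [SigmaFinite ν] (hν : ∀ᵐ x ∂ν, 0 ≤ x) (M : ℕ)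
    {R0 Rs P : ℝ} (hR0 : 0 < R0) (hRs : 0 < Rs) (hP : 0 < P) :
    {ω : Fin (M + 1) → ℝ | (⨆ m : Fin M, rateFSIC P ((2 ^ R0 - 1) / P) (ω m.succ) (ω 0)) < Rs}
      =ᵐ[Measure.pi fun _ => ν]
      {ω | ω 0 ∈ Iio ((2 ^ R0 - 1) / P * 2 ^ Rs) ∨
        ∀ m : Fin M, ω m.succ ∈ Iio ((2 ^ Rs - 1) / P)} := by
  have hα0 : 0 < (2 ^ R0 - 1) / P := div_pos (two_rpow_sub_one_pos hR0) hP
  have hnonneg : ∀ᵐ ω ∂Measure.pi (fun _ : Fin (M + 1) => ν), ∀ i, 0 ≤ ω i :=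
    ae_all_iff.2 fun i => Measure.tendsto_eval_ae_ae.eventually hν
  refine eventuallyEq_set.2 (hnonneg.mono fun ω hω => ?_)
  simp only [mem_ofPred_eq, mem_Iio, Real.iSup_lt_iff_of_finite hRs,
    rateFSIC_lt_iff hP hα0 (hω _) hRs, forall_or_right, or_comm]

lemma outageFSIC_eq (M : ℕ) {R0 Rs P : ℝ} (hR0 : 0 < R0) (hRs : 0 < Rs) (hP : 0 < P) :
    outageFSIC M R0 Rs P =
      (1 - exp (-((2 ^ R0 - 1) / P * 2 ^ Rs))) +
        exp (-((2 ^ R0 - 1) / P * 2 ^ Rs)) * (1 - exp (-((2 ^ Rs - 1) / P))) ^ M := by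
  have := isProbabilityMeasure_expMeasure one_pos
  set u := (2 ^ R0 - 1) / P * 2 ^ Rs
  set v := (2 ^ Rs - 1) / P
  have hu : 0 ≤ u := mul_nonneg (div_pos (two_rpow_sub_one_pos hR0) hP).le (by positivity)
  have hv : 0 ≤ v := (div_pos (two_rpow_sub_one_pos hRs) hP).le
  have hnonneg_one_sub_exp {x : ℝ} (hx : 0 ≤ x) : 0 ≤ 1 - exp (-x) :=
    sub_nonneg.2 (exp_le_one_iff.2 (neg_nonpos.2 hx))
  have hsecond : 0 ≤ exp (-u) * (1 - exp (-v)) ^ M :=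
    mul_nonneg (exp_nonneg _) (pow_nonneg (hnonneg_one_sub_exp hv) _)
  rw [outageFSIC,
    measure_congr (iSup_rateFSIC_lt_ae_eq (ae_nonneg_expMeasure one_pos) M hR0 hRs hP),
    Measure.pi_setOf_zero_mem_or_forall_succ_mem _ measurableSet_Iio,
    expMeasure_Iio one_pos hu, expMeasure_compl_Iio one_pos hu, expMeasure_Iio one_pos hv]
  simp only [one_mul]
  rw [← ENNReal.ofReal_pow (hnonneg_one_sub_exp hv), ← ENNReal.ofReal_mul (exp_nonneg _),
    ← ENNReal.ofReal_add (hnonneg_one_sub_exp hu) hsecond,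
    ENNReal.toReal_ofReal (add_nonneg (hnonneg_one_sub_exp hu) hsecond)]

lemma Asymptotics.IsEquivalent.add_add_of_eventually_nonneg {α : Type*} {u v t w : α → ℝ}
    {l : Filter α} (hv : 0 ≤ᶠ[l] v) (hw : 0 ≤ᶠ[l] w) (hu : u ~[l] v) (ht : t ~[l] w) :
    u + t ~[l] v + w := by
  refine (hu.isLittleO.add_add ht.isLittleO).congr' (.of_forall fun x => ?_) ?_
  · simp only [Pi.sub_apply, Pi.add_apply]; ring
  · filter_upwards [hv, hw] with x hvx hwx
    simp [abs_of_nonneg hvx, abs_of_nonneg hwx]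

lemma Real.isEquivalent_one_sub_exp_neg : (fun x : ℝ => 1 - exp (-x)) ~[𝓝 0] id := by
  have hderiv : HasDerivAt (fun x : ℝ => 1 - exp (-x)) 1 0 := by
    simpa using ((hasDerivAt_neg 0).exp).const_sub 1
  change (fun x : ℝ => 1 - exp (-x) - x) =o[𝓝 0] fun x => x
  simpa using hderiv.isLittleO

lemma outageFSIC_isEquivalent (M : ℕ) {R0 Rs : ℝ} (hR0 : 0 < R0) (hRs : 0 < Rs) :
    (fun P => outageFSIC M R0 Rs P) ~[atTop]
      fun P => (2 ^ R0 - 1) * 2 ^ Rs / P + ((2 ^ Rs - 1) / P) ^ M := by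
  set c : ℝ := (2 ^ R0 - 1) * 2 ^ Rs
  set εs : ℝ := 2 ^ Rs - 1
  have hc : 0 < c := mul_pos (two_rpow_sub_one_pos hR0) (by positivity)
  have hεs : 0 < εs := two_rpow_sub_one_pos hRs
  have hinv (a : ℝ) : Tendsto (fun P : ℝ => a / P) atTop (𝓝 0) :=
    tendsto_const_nhds.div_atTop tendsto_id
  have hfirst : (fun P => 1 - exp (-(c / P))) ~[atTop] fun P => c / P :=
    Real.isEquivalent_one_sub_exp_neg.comp_tendsto (hinv c)
  have hexp : (fun P => exp (-(c / P))) ~[atTop] fun _ => 1 :=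
    (isEquivalent_const_iff_tendsto one_ne_zero).2 <| by
      simpa [Function.comp_def] using
        ((continuous_exp.comp continuous_neg).tendsto 0).comp (hinv c)
  have hsecond : (fun P => exp (-(c / P)) * (1 - exp (-(εs / P))) ^ M) ~[atTop]
      fun P => (εs / P) ^ M := by
    convert hexp.mul ((Real.isEquivalent_one_sub_exp_neg.comp_tendsto (hinv εs)).pow M) using 1 <;>
      funext P <;> simp
  refine (hfirst.add_add_of_eventually_nonneg ?_ ?_ hsecond).congr_left ?_
  · filter_upwards [eventually_gt_atTop 0] with P hP using by positivity
  · filter_upwards [eventually_gt_atTop 0] with P hP using by positivity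
  · filter_upwards [eventually_gt_atTop 0] with P hP
    simp only [Pi.add_apply, outageFSIC_eq M hR0 hRs hP, div_mul_eq_mul_div, c, εs]

/-- Corollary 3: with equal powers `P0 = Ps = P`, as `P → ∞`,
`P̂out(P) / (ε0(1+εs)/P + εs^M/P^M) → 1`; in particular `P̂out(P) → 0`
(no outage error floor). -/
theorem fsic_pa_outage_high_snr
    (M : ℕ) (hM : 1 ≤ M) (R0 Rs : ℝ) (hR0 : 0 < R0) (hRs : 0 < Rs)
    (ε0 εs : ℝ) (hε0 : ε0 = 2 ^ R0 - 1) (hεs : εs = 2 ^ Rs - 1) :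
    Tendsto (fun P : ℝ =>
        outageFSIC M R0 Rs P / (ε0 * (1 + εs) / P + εs ^ M / P ^ M))
      atTop (nhds 1) ∧
    Tendsto (fun P : ℝ => outageFSIC M R0 Rs P) atTop (nhds 0) := by
  have hequiv : (fun P => outageFSIC M R0 Rs P) ~[atTop]
      fun P => ε0 * (1 + εs) / P + εs ^ M / P ^ M := by
    refine (outageFSIC_isEquivalent M hR0 hRs).congr_right (.of_forall fun P => ?_)
    simp only [hε0, hεs, div_pow, add_sub_cancel]
  have hpos : ∀ᶠ P in atTop, ε0 * (1 + εs) / P + εs ^ M / P ^ M ≠ 0 := by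
    have := two_rpow_sub_one_pos hR0
    have := two_rpow_sub_one_pos hRs
    filter_upwards [eventually_gt_atTop 0] with P hP
    subst hε0 hεs
    positivity
  have hvanish : Tendsto (fun P => ε0 * (1 + εs) / P + εs ^ M / P ^ M) atTop (𝓝 0) := by
    simpa using ((tendsto_const_nhds (x := ε0 * (1 + εs))).div_atTop tendsto_id).add
      ((tendsto_const_nhds (x := εs ^ M)).div_atTop (tendsto_pow_atTop (by omega : M ≠ 0)))
  exact ⟨(isEquivalent_iff_tendsto_one hpos).1 hequiv, hequiv.symm.tendsto_nhds hvanish⟩
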